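/- With c_i^n the Taylor coefficients at 0 of (z + 1/(z+2))^n, for any 0 ≤ l ≤ n: c_{n−l}^n = 2^{−(2n−l)} Σ_{a=l}^n C(a, a−l) C(2n, n+a), and in particular c_{n−l}^n > 0. -/

import Mathlib

/-!
Put `x = 2u`. Since `1 + 2u = u + (1 + u)`, the binomial theorem gives
`(x + 1/(x+2))^n = (1+2u)^(2n) / (2^n (1+u)^n) = 2^(-n) ∑ᵢ C(2n,i) uⁱ (1+u)^(n-i)`.
The `i`-th summand is `uⁱ` times a binomial series, so it contributes nothing to the coefficient
of `u^m` when `i > m`; for `i ≤ m ≤ n` the exponent `n - i` is a natural number and the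
contribution is `C(2n,i) C(n-i,m-i)`. Uniqueness of power-series coefficients then gives
`2^m c_m = 2^(-n) ∑_{i ≤ m} C(2n,i) C(n-i,m-i)`, which becomes the stated sum under `a = n - i`;
the term `a = n` makes it positive.
-/

open Finset

theorem hasFPowerSeriesOnBall_ofScalars_of_hasSum {c : ℕ → ℝ} {f : ℝ → ℝ} {r : NNReal}
    (hc : ∀ x : ℝ, |x| < r → HasSum (fun i => c i * x ^ i) (f x)) (hr : 0 < r) :
    HasFPowerSeriesOnBall f (.ofScalars ℝ c) 0 r := by
  refine ⟨?_, by exact_mod_cast hr, fun {y} hy => ?_⟩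
  · refine ENNReal.le_of_forall_pos_nnreal_lt fun ρ _ hρ => ?_
    have hρr : |(ρ : ℝ)| < r := by simpa using hρ
    refine (FormalMultilinearSeries.ofScalars ℝ c).le_radius_of_tendsto (l := 0) ?_
    simpa using (hc ρ hρr).summable.tendsto_atTop_zero.norm
  · have hy : |y| < r := by simpa [enorm_eq_nnnorm, ← NNReal.coe_lt_coe] using hy
    simpa [FormalMultilinearSeries.ofScalars_apply_eq, mul_comm] using hc y hy

theorem eq_of_forall_hasSum_mul_pow {c d : ℕ → ℝ} {f : ℝ → ℝ} {r : ℝ} (hr : 0 < r)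
    (hc : ∀ x : ℝ, |x| < r → HasSum (fun i => c i * x ^ i) (f x))
    (hd : ∀ x : ℝ, |x| < r → HasSum (fun i => d i * x ^ i) (f x)) : c = d := by
  lift r to NNReal using hr.le
  have hr : 0 < r := by exact_mod_cast hr
  exact (FormalMultilinearSeries.ofScalars_series_eq_iff ℝ c d).mp <|
    (hasFPowerSeriesOnBall_ofScalars_of_hasSum hc hr).hasFPowerSeriesAt.eq_formalMultilinearSeries
      (hasFPowerSeriesOnBall_ofScalars_of_hasSum hd hr).hasFPowerSeriesAt

theorem HasSum.pow_mul_shift {R : Type*} [CommSemiring R] [TopologicalSpace R]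
    [IsTopologicalSemiring R] {b : ℕ → R} {x s : R} (h : HasSum (fun j => b j * x ^ j) s)
    (k : ℕ) : HasSum (fun m => (if k ≤ m then b (m - k) else 0) * x ^ m) (x ^ k * s) := by
  rw [← (add_left_injective k).hasSum_iff]
  · simpa [Function.comp_def, pow_add, mul_comm, mul_left_comm] using h.mul_left (x ^ k)
  · intro m hm
    rw [if_neg fun hkm => hm ⟨m - k, Nat.sub_add_cancel hkm⟩, zero_mul]

theorem Real.hasSum_choose_mul_pow (a : ℝ) {u : ℝ} (hu : |u| < 1) :
    HasSum (fun j => Ring.choose a j * u ^ j) ((1 + u) ^ a) := by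
  have := Real.one_add_rpow_hasFPowerSeriesOnBall_zero (a := a) |>.hasSum (y := u)
    (by simpa [enorm_eq_nnnorm, ← NNReal.coe_lt_coe] using hu)
  simpa [binomialSeries, mul_comm] using this

theorem two_mul_add_one_div_pow_eq_sum (n : ℕ) {u : ℝ} (hu : 0 < 1 + u) :
    (2 * u + 1 / (2 * u + 2)) ^ n = (2 : ℝ)⁻¹ ^ n *
      ∑ i ∈ range (2 * n + 1), (2 * n).choose i * (u ^ i * (1 + u) ^ ((n : ℝ) - i)) := by
  have hsplit : ∀ i ∈ range (2 * n + 1),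
      (2 * n).choose i * (u ^ i * (1 + u) ^ ((n : ℝ) - i)) =
        (2 * n).choose i * (u ^ i * (1 + u) ^ (2 * n - i)) / (1 + u) ^ n := by
    intro i hi
    have hi : i ≤ 2 * n := Nat.lt_succ_iff.mp (mem_range.mp hi)
    rw [show (n : ℝ) - i = ((2 * n - i : ℕ) : ℝ) - n by push_cast [Nat.cast_sub hi]; ring,
      Real.rpow_sub hu, Real.rpow_natCast, Real.rpow_natCast]
    ring
  have hbinom : (1 + 2 * u) ^ (2 * n) =
      ∑ i ∈ range (2 * n + 1), (2 * n).choose i * (u ^ i * (1 + u) ^ (2 * n - i)) := by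
    rw [show 1 + 2 * u = u + (1 + u) by ring, add_pow]
    exact sum_congr rfl fun i _ => by ring
  have hbase : 2 * u + 1 / (2 * u + 2) = (1 + 2 * u) ^ 2 / (2 * (1 + u)) := by
    have : 2 * u + 2 ≠ 0 := by linarith
    rw [eq_div_iff (by positivity), show 2 * (1 + u) = 2 * u + 2 by ring, add_mul,
      one_div_mul_cancel this]
    ring
  rw [sum_congr rfl hsplit, ← sum_div, ← hbinom, hbase, div_pow, ← pow_mul, mul_pow,
    inv_pow, ← div_eq_inv_mul, div_div, mul_comm ((1 + u) ^ n)]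

/-- The Taylor coefficients of `u ↦ (2u + 1/(2u+2))^n`, i.e. `2^m c_m` in the notation of the
theorem; the `i`-th summand comes from `uⁱ (1+u)^(n-i)`. -/
noncomputable def scaledCoeff (n m : ℕ) : ℝ :=
  (2 : ℝ)⁻¹ ^ n * ∑ i ∈ range (2 * n + 1),
    if i ≤ m then (2 * n).choose i * Ring.choose ((n : ℝ) - i) (m - i) else 0

theorem hasSum_scaledCoeff_mul_pow (n : ℕ) {u : ℝ} (hu : |u| < 1) :
    HasSum (fun m => scaledCoeff n m * u ^ m) ((2 * u + 1 / (2 * u + 2)) ^ n) := by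
  rw [two_mul_add_one_div_pow_eq_sum n (by linarith [neg_abs_le u])]
  refine (hasSum_sum fun i _ => ((Real.hasSum_choose_mul_pow _ hu).pow_mul_shift i).mul_left
    ((2 * n).choose i : ℝ)).mul_left _ |>.congr_fun fun m => ?_
  simp only [scaledCoeff, mul_sum, sum_mul]
  refine sum_congr rfl fun i _ => ?_
  split_ifs <;> ring

theorem scaledCoeff_of_le {n m : ℕ} (hm : m ≤ n) :
    scaledCoeff n m = (2 : ℝ)⁻¹ ^ n *
      ∑ i ∈ range (m + 1), (((2 * n).choose i * (n - i).choose (m - i) : ℕ) : ℝ) := by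
  rw [scaledCoeff, ← sum_filter,
    show (range (2 * n + 1)).filter (· ≤ m) = range (m + 1) by
      ext i; simp only [mem_filter, mem_range]; omega]
  refine congrArg _ (sum_congr rfl fun i hi => ?_)
  have hi : i ≤ n := by have := mem_range.mp hi; omega
  rw [show (n : ℝ) - i = ((n - i : ℕ) : ℝ) by push_cast [Nat.cast_sub hi]; ring,
    Ring.choose_natCast]
  push_cast
  ring

theorem sum_range_choose_mul_choose_eq_sum_Icc {n l : ℕ} (hl : l ≤ n) :
    ∑ i ∈ range (n - l + 1), (2 * n).choose i * (n - i).choose (n - l - i) =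
      ∑ a ∈ Icc l n, a.choose (a - l) * (2 * n).choose (n + a) := by
  refine sum_nbij' (n - ·) (n - ·) ?_ ?_ ?_ ?_ ?_
  · intro i hi; simp only [mem_range, mem_Icc] at hi ⊢; omega
  · intro a ha; simp only [mem_range, mem_Icc] at ha ⊢; omega
  · intro i hi; simp only [mem_range] at hi; omega
  · intro a ha; simp only [mem_Icc] at ha; omega
  · intro i hi
    have hi : i < n - l + 1 := mem_range.mp hi
    rw [show n - i - l = n - l - i by omega, show n + (n - i) = 2 * n - i by omega,
      Nat.choose_symm (by omega : i ≤ 2 * n), mul_comm]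

theorem sum_Icc_choose_mul_choose_pos {n l : ℕ} (hl : l ≤ n) :
    0 < ∑ a ∈ Icc l n, a.choose (a - l) * (2 * n).choose (n + a) :=
  sum_pos' (fun _ _ => Nat.zero_le _) ⟨n, mem_Icc.mpr ⟨hl, le_rfl⟩,
    Nat.mul_pos (Nat.choose_pos (Nat.sub_le n l)) (Nat.choose_pos (by omega))⟩

theorem stmt_16 (n : ℕ) (c : ℕ → ℝ)
    (hc : ∀ x : ℝ, |x| < 2 → HasSum (fun i : ℕ => c i * x ^ i) ((x + 1 / (x + 2)) ^ n))
    (l : ℕ) (hl : l ≤ n) :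
    c (n - l) =
        (2 : ℝ)⁻¹ ^ (2 * n - l) *
          ∑ a ∈ Finset.Icc l n, (a.choose (a - l) : ℝ) * ((2 * n).choose (n + a) : ℝ) ∧
      0 < c (n - l) := by
  have hscaled : ∀ u : ℝ, |u| < 1 →
      HasSum (fun i => c i * 2 ^ i * u ^ i) ((2 * u + 1 / (2 * u + 2)) ^ n) := fun u hu => by
    simpa [mul_pow, mul_assoc] using hc (2 * u) (by rw [abs_mul, abs_two]; linarith)
  have hcoeff := congrFun (eq_of_forall_hasSum_mul_pow one_pos hscaled
    fun u hu => hasSum_scaledCoeff_mul_pow n hu) (n - l)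
  rw [scaledCoeff_of_le (Nat.sub_le n l), ← Nat.cast_sum,
    sum_range_choose_mul_choose_eq_sum_Icc hl] at hcoeff
  push_cast at hcoeff
  have hval : c (n - l) = (2 : ℝ)⁻¹ ^ (2 * n - l) *
      ∑ a ∈ Icc l n, (a.choose (a - l) : ℝ) * ((2 * n).choose (n + a) : ℝ) := by
    rw [show 2 * n - l = n + (n - l) by omega, pow_add, mul_comm ((2 : ℝ)⁻¹ ^ n), mul_assoc,
      ← hcoeff, mul_left_comm, ← mul_pow, inv_mul_cancel₀ two_ne_zero, one_pow, mul_one]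
  refine ⟨hval, hval ▸ mul_pos (by positivity) ?_⟩
  exact_mod_cast sum_Icc_choose_mul_choose_pos hl
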